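/- arXiv:2604.15851 — 9 statements merged into one kernel-verified Lean document; each statement's English description precedes it below -/
import Mathlib

section
/- Let d ∈ ℕ with d ≥ 1, let Δ > 0 and ε > 0, and let ν = Lap(Δ/ε) be the Laplace measure with scale Δ/ε. For a ∈ ℝ^d let μ_a denote the pushforward of the d-fold product measure ν^{⊗d} under the translation x ↦ x + a. Then for all a, a' ∈ ℝ^d with ‖a − a'‖₁ ≤ Δ and every measurable set S ⊆ ℝ^d, μ_a(S) ≤ exp(ε) · μ_{a'}(S). (Privacy of the Laplace mechanism with ℓ1-sensitivity Δ.) -/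
open MeasureTheory
open scoped ENNReal NNReal

/-! Shifting the Laplace density from `c'` to `c` multiplies it pointwise by at most
`exp (|c - c'| / b)`, by the triangle inequality, so
`Lap(b) + c ≤ exp (|c - c'| / b) • (Lap(b) + c')` as measures. Product measures are monotone
in each factor and pull out scalar factors, so the `d`-dimensional mechanism satisfies the same
inequality with the factor `exp (‖a - a'‖₁ / b) ≤ exp (Δ / b) = exp ε`. -/

noncomputable def lapMeasure (b : ℝ) : Measure ℝ :=
  volume.withDensity fun x => ENNReal.ofReal (1 / (2 * b) * Real.exp (-|x| / b))

namespace MeasureTheory.Measure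

section Pi

variable {ι : Type*} [Fintype ι] {α : ι → Type*} [∀ i, MeasurableSpace (α i)]

theorem pi_mono {μ ν : ∀ i, Measure (α i)} (h : ∀ i, μ i ≤ ν i) :
    Measure.pi μ ≤ Measure.pi ν := by
  -- `OuterMeasure.pi` is the largest outer measure bounded by the products on boxes.
  refine le_iff.2 fun s hs => ?_
  rw [Measure.pi, Measure.pi, toMeasure_apply _ _ hs, toMeasure_apply _ _ hs]
  refine (OuterMeasure.le_pi.2 fun t _ => ?_) s
  exact (OuterMeasure.pi_pi_le _ t).trans (Finset.prod_le_prod' fun i _ => h i (t i))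

theorem pi_smul (μ : ∀ i, Measure (α i)) [∀ i, SigmaFinite (μ i)] {c : ι → ℝ≥0∞}
    (hc : ∀ i, c i ≠ ∞) :
    Measure.pi (fun i => c i • μ i) = (∏ i, c i) • Measure.pi μ := by
  lift c to ι → ℝ≥0 using hc
  have (i : ι) : SigmaFinite ((c i : ℝ≥0∞) • μ i) := SMul.sigmaFinite (c i)
  refine pi_eq fun s hs => ?_
  simp [pi_pi, Finset.prod_mul_distrib]

theorem pi_map_add_const [∀ i, Add (α i)] [∀ i, MeasurableAdd (α i)]
    (μ : ∀ i, Measure (α i)) (a : ∀ i, α i) [∀ i, SigmaFinite ((μ i).map (· + a i))] :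
    (Measure.pi μ).map (· + a) = Measure.pi fun i => (μ i).map (· + a i) :=
  pi_map_pi fun i => (measurable_add_const (a i)).aemeasurable

end Pi

theorem map_add_const_withDensity {G : Type*} [MeasurableSpace G] [AddGroup G]
    [MeasurableAdd G] [MeasurableSub G]
    (μ : Measure G) [μ.IsAddRightInvariant] {g : G → ℝ≥0∞} (hg : Measurable g) (c : G) :
    (μ.withDensity g).map (· + c) = μ.withDensity fun x => g (x - c) := by
  ext s hs
  rw [map_apply (measurable_add_const c) hs,
    withDensity_apply _ (hs.preimage (measurable_add_const c)), withDensity_apply _ hs]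
  simpa using (measurePreserving_add_right μ c).setLIntegral_comp_preimage hs
    (hg.comp (measurable_sub_const c))

end MeasureTheory.Measure

open Measure Real

instance (b : ℝ) : SigmaFinite (lapMeasure b) := by
  unfold lapMeasure; infer_instance

instance (b c : ℝ) : SigmaFinite ((lapMeasure b).map (· + c)) :=
  (MeasurableEquiv.addRight c).sigmaFinite_map

theorem exp_neg_abs_sub_div_le {b : ℝ} (hb : 0 ≤ b) (x c c' : ℝ) :
    exp (-|x - c| / b) ≤ exp (|c - c'| / b) * exp (-|x - c'| / b) := by
  rw [← exp_add, ← add_div]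
  gcongr
  linarith [abs_sub_le x c c']

theorem lapMeasure_map_add_le {b : ℝ} (hb : 0 ≤ b) (c c' : ℝ) :
    (lapMeasure b).map (· + c) ≤
      ENNReal.ofReal (exp (|c - c'| / b)) • (lapMeasure b).map (· + c') := by
  have hdens : Measurable fun x : ℝ => ENNReal.ofReal (1 / (2 * b) * exp (-|x| / b)) := by
    fun_prop
  rw [lapMeasure, map_add_const_withDensity _ hdens, map_add_const_withDensity _ hdens,
    ← withDensity_smul' _ _ ENNReal.ofReal_ne_top]
  refine withDensity_mono (Filter.Eventually.of_forall fun x => ?_)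
  simp only [Pi.smul_apply, smul_eq_mul, ← ENNReal.ofReal_mul (exp_pos _).le]
  refine ENNReal.ofReal_le_ofReal ?_
  rw [mul_left_comm]
  gcongr
  exact exp_neg_abs_sub_div_le hb x c c'

theorem laplace_mechanism_privacy_general (d : ℕ) (Δ ε : ℝ) (hΔ : 0 < Δ) (hε : 0 < ε)
    (a a' : Fin d → ℝ) (hsens : ∑ i, |a i - a' i| ≤ Δ)
    (S : Set (Fin d → ℝ)) :
    Measure.map (fun x => x + a) (Measure.pi fun _ : Fin d => lapMeasure (Δ / ε)) S ≤
      ENNReal.ofReal (Real.exp ε) *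
        Measure.map (fun x => x + a') (Measure.pi fun _ : Fin d => lapMeasure (Δ / ε)) S := by
  have hb : 0 ≤ Δ / ε := div_nonneg hΔ.le hε.le
  have hprod :
      ∏ i, ENNReal.ofReal (exp (|a i - a' i| / (Δ / ε))) ≤ ENNReal.ofReal (exp ε) := by
    rw [← ENNReal.ofReal_prod_of_nonneg fun i _ => (exp_pos _).le, ← exp_sum,
      ← Finset.sum_div]
    gcongr
    calc (∑ i, |a i - a' i|) / (Δ / ε) ≤ Δ / (Δ / ε) := by gcongr
      _ = ε := by field_simp
  rw [pi_map_add_const, pi_map_add_const]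
  calc _ ≤ Measure.pi (fun i => ENNReal.ofReal (exp (|a i - a' i| / (Δ / ε))) •
          (lapMeasure (Δ / ε)).map (· + a' i)) S :=
        pi_mono (fun i => lapMeasure_map_add_le hb _ _) S
    _ = (∏ i, ENNReal.ofReal (exp (|a i - a' i| / (Δ / ε)))) *
          Measure.pi (fun i => (lapMeasure (Δ / ε)).map (· + a' i)) S := by
        rw [pi_smul _ fun i => ENNReal.ofReal_ne_top, Measure.smul_apply, smul_eq_mul]
    _ ≤ _ := by gcongr

/-- Privacy of the Laplace mechanism with ℓ1-sensitivity `Δ`: adding i.i.d. `Lap(Δ/ε)`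
noise to each coordinate of `a` yields output distributions that satisfy the `ε`-DP
inequality whenever `‖a − a'‖₁ ≤ Δ`. -/
theorem laplace_mechanism_privacy (d : ℕ) (hd : 1 ≤ d) (Δ ε : ℝ) (hΔ : 0 < Δ) (hε : 0 < ε)
    (a a' : Fin d → ℝ) (hsens : ∑ i, |a i - a' i| ≤ Δ)
    (S : Set (Fin d → ℝ)) (hS : MeasurableSet S) :
    Measure.map (fun x => x + a) (Measure.pi fun _ : Fin d => lapMeasure (Δ / ε)) S ≤
      ENNReal.ofReal (Real.exp ε) *
        Measure.map (fun x => x + a') (Measure.pi fun _ : Fin d => lapMeasure (Δ / ε)) S :=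
  laplace_mechanism_privacy_general d Δ ε hΔ hε a a' hsens S
end

section
/- Let Δ > 0 and ε > 0, let ν = Lap(Δ/(2ε)) be the Laplace measure with scale Δ/(2ε), and for c ∈ ℝ let μ_c denote the pushforward of ν under the translation x ↦ x + c. Then for all a, a' ∈ ℝ with |a − a'| = Δ there exists a measurable set S ⊆ ℝ such that μ_a(S) > exp(ε) · μ_{a'}(S). In other words, the under-calibrated Laplace mechanism with noise scale Δ/(2ε) does not satisfy ε-differential privacy when the sensitivity Δ is attained. -/
open MeasureTheory

/-! The half-line `[t, ∞)` with `t ≥ 0` has `Lap(b)`-mass `exp(-t/b)/2`. If `a - a' = Δ`, the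
set `[a, ∞)` has mass `1/2` under `μ_a` but only `exp(-Δ/b)/2 = exp(-2ε)/2` under `μ_{a'}`, a
privacy loss of `2ε > ε`. The case `a' - a = Δ` is the mirror image, using `(-∞, a]` and the
symmetry of `Lap(b)` under `x ↦ -x`. -/

open Set Real

instance lapMeasure.instIsNegInvariant (b : ℝ) : (lapMeasure b).IsNegInvariant := by
  refine ⟨Measure.ext fun s hs => ?_⟩
  rw [Measure.neg_apply, lapMeasure, withDensity_apply _ hs, withDensity_apply _ hs.neg]
  simpa only [Set.neg_preimage, abs_neg] using
    (Measure.measurePreserving_neg volume).setLIntegral_comp_preimage_emb measurableEmbedding_neg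
      (fun x => ENNReal.ofReal (1 / (2 * b) * exp (-|x| / b))) s

theorem integral_exp_neg_div_Ioi {b : ℝ} (hb : 0 < b) (t : ℝ) :
    ∫ x in Ioi t, exp (-x / b) = b * exp (-t / b) := by
  simp_rw [neg_div, div_eq_inv_mul]
  rw [integral_comp_mul_left_Ioi (fun x => exp (-x)) t (inv_pos.mpr hb), integral_exp_neg_Ioi,
    smul_eq_mul, inv_inv]

theorem lapMeasure_Ici {b t : ℝ} (hb : 0 < b) (ht : 0 ≤ t) :
    lapMeasure b (Ici t) = ENNReal.ofReal (exp (-t / b) / 2) := by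
  have hdensity : ∀ x ∈ Ioi t, ENNReal.ofReal (1 / (2 * b) * exp (-|x| / b))
      = ENNReal.ofReal (1 / (2 * b) * exp (-x / b)) := fun x hx => by
    rw [abs_of_pos (ht.trans_lt hx)]
  have hint : IntegrableOn (fun x => exp (-x / b)) (Ioi t) := by
    simpa only [neg_div, div_eq_inv_mul, neg_mul, mul_neg] using exp_neg_integrableOn_Ioi t (inv_pos.mpr hb)
  rw [lapMeasure, withDensity_apply _ measurableSet_Ici, ← setLIntegral_congr Ioi_ae_eq_Ici,
    setLIntegral_congr_fun measurableSet_Ioi hdensity,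
    ← ofReal_integral_eq_lintegral_ofReal (hint.const_mul _) (.of_forall fun x => by positivity),
    integral_const_mul, integral_exp_neg_div_Ioi hb]
  congr 1
  field_simp

theorem lapMeasure_Iic_neg (b t : ℝ) : lapMeasure b (Iic (-t)) = lapMeasure b (Ici t) := by
  rw [← neg_Ici, Measure.measure_neg]

theorem ofReal_exp_mul_lapMeasure_Ici_lt {b t ε : ℝ} (hb : 0 < b) (ht : 0 ≤ t) (hε : ε < t / b) :
    ENNReal.ofReal (exp ε) * lapMeasure b (Ici t) < lapMeasure b (Ici 0) := by
  rw [lapMeasure_Ici hb ht, lapMeasure_Ici hb le_rfl, ← ENNReal.ofReal_mul (exp_pos ε).le,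
    ENNReal.ofReal_lt_ofReal_iff (by positivity), neg_zero, zero_div, exp_zero, ← mul_div_assoc,
    ← exp_add, div_lt_div_iff_of_pos_right two_pos, exp_lt_one_iff, neg_div]
  linarith

/-- The under-calibrated Laplace mechanism with noise scale `Δ/(2ε)` does not satisfy
`ε`-differential privacy when the sensitivity `Δ` is attained: for `|a − a'| = Δ`, there is a
measurable set `S` with `μ_a(S) > exp(ε) · μ_{a'}(S)`. -/
theorem undercalibrated_laplace_not_dp (Δ ε : ℝ) (hΔ : 0 < Δ) (hε : 0 < ε)
    (a a' : ℝ) (h : |a - a'| = Δ) :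
    ∃ S : Set ℝ, MeasurableSet S ∧
      ENNReal.ofReal (Real.exp ε) *
          Measure.map (fun x => x + a') (lapMeasure (Δ / (2 * ε))) S <
        Measure.map (fun x => x + a) (lapMeasure (Δ / (2 * ε))) S := by
  have hb : 0 < Δ / (2 * ε) := by positivity
  have hloss : ε < Δ / (Δ / (2 * ε)) := by
    rw [div_div_cancel₀ hΔ.ne']
    linarith
  have key := ofReal_exp_mul_lapMeasure_Ici_lt hb hΔ.le hloss
  rcases (abs_eq hΔ.le).mp h with hc | hc
  · refine ⟨Ici a, measurableSet_Ici, ?_⟩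
    rwa [Measure.map_apply (measurable_add_const a') measurableSet_Ici,
      Measure.map_apply (measurable_add_const a) measurableSet_Ici,
      preimage_add_const_Ici, preimage_add_const_Ici, hc, sub_self]
  · refine ⟨Iic a, measurableSet_Iic, ?_⟩
    rwa [Measure.map_apply (measurable_add_const a') measurableSet_Iic,
      Measure.map_apply (measurable_add_const a) measurableSet_Iic,
      preimage_add_const_Iic, preimage_add_const_Iic, hc, sub_self, lapMeasure_Iic_neg,
      ← neg_zero, lapMeasure_Iic_neg]
end

section
/- Let d ∈ ℕ with d ≥ 1, let Δ > 0 and μ > 0, and set σ = Δ/μ. Let Φ denote the cumulative distribution function of the standard Gaussian measure N(0, 1), i.e., Φ(t) = N(0,1)((−∞, t]). For a ∈ ℝ^d let γ_a = ⊗_i N(a_i, σ²) be the product Gaussian measure on ℝ^d. Then for all a, b ∈ ℝ^d with ‖a − b‖₂ ≤ Δ, every ε ≥ 0, and every measurable set S ⊆ ℝ^d: γ_a(S) ≤ exp(ε)·γ_b(S) + Φ(μ/2 − ε/μ) − exp(ε)·Φ(−μ/2 − ε/μ). This is the exact (ε, δ)-differential-privacy curve of the μ-GDP Gaussian mechanism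 with ℓ2-sensitivity Δ and standard deviation Δ/μ. -/
open MeasureTheory ProbabilityTheory

/-- The standard Gaussian cumulative distribution function `Φ(t) = N(0,1)((−∞, t])`. -/
noncomputable def stdGaussianCDF (t : ℝ) : ℝ := (gaussianReal 0 1 (Set.Iic t)).toReal

/-!
The likelihood ratio of `γ_a` against `γ_b` is
`exp ((⟪a - b, x⟫ - ⟪a - b, (a + b) / 2⟫) / σ²)`, a monotone function of a single linear form.
By the Neyman–Pearson argument, `γ_a S - e^ε γ_b S` is therefore largest on the half-space `E`
where the ratio exceeds `e^ε` (and nonnegative there, the case `S = ∅`). Under both measures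
the linear form is a one-dimensional Gaussian, which gives
`γ_a E - e^ε γ_b E = δ(η) := Φ(η/2 - ε/η) - e^ε Φ(-η/2 - ε/η)` with `η = ‖a - b‖₂ / σ ≤ μ`.
Finally `δ` is increasing, with `δ'(η) = Φ'(η/2 - ε/η)`.
-/

open Real Set
open scoped NNReal ENNReal

theorem withDensity_add_mul_le_of_threshold {α : Type*} [MeasurableSpace α] (ν : Measure α)
    {r : α → ℝ≥0∞} {K : ℝ≥0∞} {E S : Set α} (hE : MeasurableSet E) (hS : MeasurableSet S)
    (h_le : ∀ x ∉ E, r x ≤ K) (h_ge : ∀ x ∈ E, K ≤ r x) :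
    ν.withDensity r S + K * ν E ≤ ν.withDensity r E + K * ν S := by
  have h_out : ν.withDensity r (S \ E) ≤ K * ν (S \ E) := by
    rw [withDensity_apply _ (hS.diff hE), ← setLIntegral_const]
    exact setLIntegral_mono' (hS.diff hE) fun x hx => h_le x hx.2
  have h_in : K * ν (E \ S) ≤ ν.withDensity r (E \ S) := by
    rw [withDensity_apply _ (hE.diff hS), ← setLIntegral_const]
    exact setLIntegral_mono' (hE.diff hS) fun x hx => h_ge x hx.1
  calc ν.withDensity r S + K * ν E
      = ν.withDensity r (S ∩ E) + ν.withDensity r (S \ E)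
          + K * (ν (S ∩ E) + ν (E \ S)) := by
        rw [measure_inter_add_sdiff S hE, inter_comm, measure_inter_add_sdiff E hS]
    _ ≤ ν.withDensity r (S ∩ E) + K * ν (S \ E)
          + (K * ν (S ∩ E) + ν.withDensity r (E \ S)) := by
        rw [mul_add]; gcongr
    _ = ν.withDensity r E + K * ν S := by
        rw [← measure_inter_add_sdiff S hE, ← measure_inter_add_sdiff E hS, inter_comm E S]
        ring

theorem MeasureTheory.Measure.pi_withDensity {ι : Type*} [Fintype ι] {α : ι → Type*}
    [∀ i, MeasurableSpace (α i)] (μ : ∀ i, Measure (α i)) [∀ i, IsProbabilityMeasure (μ i)]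
    {f : ∀ i, α i → ℝ≥0∞} (hf : ∀ i, Measurable (f i))
    [∀ i, SigmaFinite ((μ i).withDensity (f i))] :
    Measure.pi (fun i => (μ i).withDensity (f i))
      = (Measure.pi μ).withDensity (fun x => ∏ i, f i (x i)) := by
  refine Measure.pi_eq fun s hs => ?_
  have h_ind : (univ.pi s).indicator (fun x => ∏ i, f i (x i))
      = fun x => ∏ i, (s i).indicator (f i) (x i) := by
    ext x
    by_cases hx : x ∈ univ.pi s
    · simp_all [indicator_of_mem]
    · obtain ⟨i, -, hi⟩ : ∃ i ∈ univ, x i ∉ s i := by simpa [Set.mem_pi] using hx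
      rw [indicator_of_notMem hx, eq_comm]
      exact Finset.prod_eq_zero (Finset.mem_univ i) (indicator_of_notMem hi _)
  have h_meas : ∀ i, Measurable ((s i).indicator (f i)) := fun i => (hf i).indicator (hs i)
  rw [withDensity_apply _ (MeasurableSet.univ_pi hs), ← lintegral_indicator (.univ_pi hs), h_ind,
    lintegral_prod_eq_prod_lintegral_of_indepFun _ _
      (iIndepFun_pi fun i => (h_meas i).aemeasurable)
      fun i => (h_meas i).comp (measurable_pi_apply i)]
  refine Finset.prod_congr rfl fun i _ => ?_
  rw [(measurePreserving_eval μ i).lintegral_comp (h_meas i), lintegral_indicator (hs i),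
    withDensity_apply _ (hs i)]

theorem gaussianReal_eq_withDensity (a b : ℝ) {v : ℝ≥0} (hv : v ≠ 0) :
    gaussianReal a v
      = (gaussianReal b v).withDensity
          (fun x => ENNReal.ofReal (exp ((a - b) * (x - (a + b) / 2) / v))) := by
  have h_pdf : gaussianPDF a v
      = gaussianPDF b v * fun x => ENNReal.ofReal (exp ((a - b) * (x - (a + b) / 2) / v)) := by
    ext x
    simp only [Pi.mul_apply, gaussianPDF, gaussianPDFReal]
    rw [← ENNReal.ofReal_mul (by positivity), mul_assoc (√_)⁻¹, ← exp_add]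
    congr 3
    field_simp
    ring
  rw [gaussianReal_of_var_ne_zero _ hv, gaussianReal_of_var_ne_zero _ hv, h_pdf,
    withDensity_mul _ (measurable_gaussianPDF _ _) (by fun_prop)]

theorem pi_gaussianReal_eq_withDensity {ι : Type*} [Fintype ι] (a b : ι → ℝ) {v : ℝ≥0}
    (hv : v ≠ 0) :
    Measure.pi (fun i => gaussianReal (a i) v)
      = (Measure.pi fun i => gaussianReal (b i) v).withDensity
          (fun x => ENNReal.ofReal (exp ((∑ i, (a i - b i) * (x i - (a i + b i) / 2)) / v))) := by
  have h_tilt : (fun i => gaussianReal (a i) v) = fun i => (gaussianReal (b i) v).withDensity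
      fun x => ENNReal.ofReal (exp ((a i - b i) * (x - (a i + b i) / 2) / v)) :=
    funext fun i => gaussianReal_eq_withDensity _ _ hv
  have : ∀ i, SigmaFinite ((gaussianReal (b i) v).withDensity
      fun x => ENNReal.ofReal (exp ((a i - b i) * (x - (a i + b i) / 2) / v))) := fun i => by
    rw [← gaussianReal_eq_withDensity _ _ hv]; infer_instance
  rw [h_tilt, Measure.pi_withDensity _ fun i => by fun_prop]
  congr with x
  rw [← ENNReal.ofReal_prod_of_nonneg fun i _ => (exp_pos _).le, ← exp_sum, Finset.sum_div]

theorem pi_gaussianReal_map_sum {ι : Type*} [Fintype ι] (m : ι → ℝ) (v : ι → ℝ≥0) :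
    (Measure.pi fun i => gaussianReal (m i) (v i)).map (fun x => ∑ i, x i)
      = gaussianReal (∑ i, m i) (∑ i, v i) := by
  refine Measure.ext_of_charFun (funext fun t => ?_)
  rw [charFun_map_sum_pi_eq_prod, Finset.prod_apply]
  simp only [charFun_gaussianReal, ← Complex.exp_sum]
  push_cast
  simp only [Finset.sum_sub_distrib, Finset.mul_sum, Finset.sum_mul, Finset.sum_div]

theorem pi_gaussianReal_map_affine {ι : Type*} [Fintype ι] (m : ι → ℝ) (v : ι → ℝ≥0)
    (c d : ι → ℝ) :
    (Measure.pi fun i => gaussianReal (m i) (v i)).map (fun x => ∑ i, c i * (x i - d i))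
      = gaussianReal (∑ i, c i * (m i - d i)) (∑ i, (c i ^ 2).toNNReal * v i) := by
  have h_coord : ∀ i, (gaussianReal (m i) (v i)).map (fun y => c i * (y - d i))
      = gaussianReal (c i * (m i - d i)) ((c i ^ 2).toNNReal * v i) := fun i => by
    change ((gaussianReal (m i) (v i)).map ((c i * ·) ∘ (· - d i))) = _
    rw [← Measure.map_map (by fun_prop) (by fun_prop), gaussianReal_map_sub_const,
      gaussianReal_map_const_mul, Real.toNNReal_of_nonneg (sq_nonneg _)]
  change ((Measure.pi _).map ((fun y => ∑ i, y i) ∘ fun x i => c i * (x i - d i))) = _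
  rw [← Measure.map_map (by fun_prop) (by fun_prop),
    Measure.pi_map_pi (f := fun i y => c i * (y - d i)) fun i => by fun_prop]
  simp_rw [h_coord]
  exact pi_gaussianReal_map_sum _ _

theorem gaussianReal_Ioi_toReal (m t : ℝ) {v : ℝ≥0} (hv : v ≠ 0) :
    (gaussianReal m v (Ioi t)).toReal = stdGaussianCDF ((m - t) / √v) := by
  have hs : 0 < √(v : ℝ) := sqrt_pos.2 (by positivity)
  have h_std : (gaussianReal m v).map (fun x => (m - x) / √v) = gaussianReal 0 1 := by
    change ((gaussianReal m v).map ((· / √v) ∘ (m - ·))) = _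
    rw [← Measure.map_map (by fun_prop) (by fun_prop), gaussianReal_map_const_sub,
      gaussianReal_map_div_const, sub_self, zero_div]
    congr
    ext
    simp [sq_sqrt (NNReal.coe_nonneg v), hv]
  have h_pre : (fun x => (m - x) / √v) ⁻¹' Iic ((m - t) / √v) = Ici t := by
    ext x
    rw [mem_preimage, mem_Iic, div_le_div_iff_of_pos_right hs, sub_le_sub_iff_left, mem_Ici]
  have := nullSingletonClass_gaussianReal (μ := m) hv
  rw [stdGaussianCDF, ← h_std, Measure.map_apply (by fun_prop) measurableSet_Iic, h_pre,
    measure_congr Ioi_ae_eq_Ici.symm]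

theorem stdGaussianCDF_eq_integral (t : ℝ) :
    stdGaussianCDF t = ∫ x in Iic t, gaussianPDFReal 0 1 x := by
  rw [stdGaussianCDF, gaussianReal_apply_eq_integral _ one_ne_zero, ENNReal.toReal_ofReal]
  exact integral_nonneg fun x => gaussianPDFReal_nonneg _ _ _

theorem hasDerivAt_stdGaussianCDF (t : ℝ) :
    HasDerivAt stdGaussianCDF (gaussianPDFReal 0 1 t) t := by
  have h_cont : Continuous (gaussianPDFReal 0 1) := by
    rw [gaussianPDFReal_def]; fun_prop
  have h_int := integrable_gaussianPDFReal 0 1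
  have h_ftc : stdGaussianCDF
      = fun u => stdGaussianCDF 0 + ∫ x in (0 : ℝ)..u, gaussianPDFReal 0 1 x := by
    funext u
    rw [stdGaussianCDF_eq_integral, stdGaussianCDF_eq_integral,
      ← intervalIntegral.integral_Iic_sub_Iic h_int.integrableOn h_int.integrableOn]
    ring
  rw [h_ftc]
  exact (intervalIntegral.integral_hasDerivAt_right h_int.intervalIntegrable
    (h_cont.stronglyMeasurableAtFilter _ _) h_cont.continuousAt).const_add _

noncomputable def gaussianPrivacyProfile (ε η : ℝ) : ℝ :=
  stdGaussianCDF (η / 2 - ε / η) - exp ε * stdGaussianCDF (-(η / 2) - ε / η)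

theorem hasDerivAt_gaussianPrivacyProfile (ε : ℝ) {η : ℝ} (hη : 0 < η) :
    HasDerivAt (gaussianPrivacyProfile ε) (gaussianPDFReal 0 1 (η / 2 - ε / η)) η := by
  have h_inv : HasDerivAt (fun y => ε / y) (-(ε / η ^ 2)) η := by
    simpa [div_eq_mul_inv] using (hasDerivAt_inv hη.ne').const_mul ε
  have h_upper := (hasDerivAt_stdGaussianCDF (η / 2 - ε / η)).comp η
    (((hasDerivAt_id η).div_const 2).sub h_inv)
  have h_lower := ((hasDerivAt_stdGaussianCDF (-(η / 2) - ε / η)).comp η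
    (((hasDerivAt_id η).div_const 2).neg.sub h_inv)).const_mul (exp ε)
  -- `(η/2 + ε/η)² - (η/2 - ε/η)² = 2ε`
  have h_pdf : exp ε * gaussianPDFReal 0 1 (-(η / 2) - ε / η)
      = gaussianPDFReal 0 1 (η / 2 - ε / η) := by
    simp only [gaussianPDFReal, NNReal.coe_one, mul_one, sub_zero]
    rw [mul_left_comm, ← exp_add]
    congr 2
    field_simp
    ring
  refine (h_upper.sub h_lower).congr_deriv ?_
  rw [← h_pdf]
  ring

theorem strictMonoOn_gaussianPrivacyProfile (ε : ℝ) :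
    StrictMonoOn (gaussianPrivacyProfile ε) (Ioi 0) := by
  refine strictMonoOn_of_deriv_pos (convex_Ioi 0)
    (fun η hη => (hasDerivAt_gaussianPrivacyProfile ε hη).continuousAt.continuousWithinAt)
    fun η hη => ?_
  rw [interior_Ioi] at hη
  rw [(hasDerivAt_gaussianPrivacyProfile ε hη).deriv]
  exact gaussianPDFReal_pos _ _ _ one_ne_zero

theorem sqrt_sum_sq_sub_pos {ι : Type*} [Fintype ι] {a b : ι → ℝ} (hab : a ≠ b) :
    0 < √(∑ i, (a i - b i) ^ 2) := by
  obtain ⟨i, hi⟩ := Function.ne_iff.1 hab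
  exact sqrt_pos.2 (Finset.sum_pos' (fun j _ => sq_nonneg _)
    ⟨i, Finset.mem_univ i, pow_two_pos_of_ne_zero (sub_ne_zero.2 hi)⟩)

theorem pi_gaussianReal_toReal_sub_le {ι : Type*} [Fintype ι] {a b : ι → ℝ} (hab : a ≠ b)
    {v : ℝ≥0} (hv : v ≠ 0) (ε : ℝ) {S : Set (ι → ℝ)} (hS : MeasurableSet S) :
    (Measure.pi (fun i => gaussianReal (a i) v) S).toReal
        - exp ε * (Measure.pi (fun i => gaussianReal (b i) v) S).toReal
      ≤ gaussianPrivacyProfile ε (√(∑ i, (a i - b i) ^ 2) / √v) := by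
  set κ := √(∑ i, (a i - b i) ^ 2)
  have hκ : 0 < κ := sqrt_sum_sq_sub_pos hab
  have hv_pos : (0 : ℝ) < v := by positivity
  set L : (ι → ℝ) → ℝ := fun x => ∑ i, (a i - b i) * (x i - (a i + b i) / 2)
  set E := L ⁻¹' Ioi (ε * v)
  have hE : MeasurableSet E := measurableSet_Ioi.preimage (by fun_prop)
  have h_NP := withDensity_add_mul_le_of_threshold (Measure.pi fun i => gaussianReal (b i) v)
    (r := fun x => ENNReal.ofReal (exp (L x / v))) (K := ENNReal.ofReal (exp ε)) hE hS
    (fun x hx => ENNReal.ofReal_le_ofReal (exp_le_exp.2 ((div_le_iff₀ hv_pos).2 (not_lt.1 hx))))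
    (fun x hx => ENNReal.ofReal_le_ofReal (exp_le_exp.2 ((le_div_iff₀ hv_pos).2 (le_of_lt hx))))
  rw [← pi_gaussianReal_eq_withDensity a b hv] at h_NP
  replace h_NP := ENNReal.toReal_mono (by finiteness) h_NP
  rw [ENNReal.toReal_add (by finiteness) (by finiteness),
    ENNReal.toReal_add (by finiteness) (by finiteness), ENNReal.toReal_mul, ENNReal.toReal_mul,
    ENNReal.toReal_ofReal (exp_pos ε).le] at h_NP
  have h_var_coe : ((∑ i, ((a i - b i) ^ 2).toNNReal * v : ℝ≥0) : ℝ) = κ ^ 2 * v := by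
    push_cast [Real.coe_toNNReal _ (sq_nonneg _)]
    rw [sq_sqrt (by positivity), Finset.sum_mul]
  have h_var : ∑ i, ((a i - b i) ^ 2).toNNReal * v ≠ 0 := by
    rw [← NNReal.coe_ne_zero, h_var_coe]; positivity
  have h_sd : √((∑ i, ((a i - b i) ^ 2).toNNReal * v : ℝ≥0) : ℝ) = κ * √v := by
    rw [h_var_coe, sqrt_mul (by positivity), sqrt_sq hκ.le]
  have h_law : ∀ m : ι → ℝ, ((Measure.pi fun i => gaussianReal (m i) v) E).toReal
      = stdGaussianCDF ((∑ i, (a i - b i) * (m i - (a i + b i) / 2) - ε * v) / (κ * √v)) := by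
    intro m
    rw [← Measure.map_apply (by fun_prop) measurableSet_Ioi, pi_gaussianReal_map_affine,
      gaussianReal_Ioi_toReal _ _ h_var, h_sd]
  have h_mean_a : ∑ i, (a i - b i) * (a i - (a i + b i) / 2) = κ ^ 2 / 2 := by
    rw [sq_sqrt (by positivity), Finset.sum_div]
    exact Finset.sum_congr rfl fun i _ => by ring
  have h_mean_b : ∑ i, (a i - b i) * (b i - (a i + b i) / 2) = -(κ ^ 2 / 2) := by
    rw [sq_sqrt (by positivity), Finset.sum_div, ← Finset.sum_neg_distrib]
    exact Finset.sum_congr rfl fun i _ => by ring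
  have h_upper : (κ ^ 2 / 2 - ε * v) / (κ * √v) = κ / √v / 2 - ε / (κ / √v) := by
    field_simp; rw [sq_sqrt hv_pos.le]
  have h_lower : (-(κ ^ 2 / 2) - ε * v) / (κ * √v) = -(κ / √v / 2) - ε / (κ / √v) := by
    field_simp; rw [sq_sqrt hv_pos.le]
  rw [h_law, h_law, h_mean_a, h_mean_b, h_upper, h_lower] at h_NP
  rw [gaussianPrivacyProfile]
  linarith

theorem gaussianPrivacyProfile_nonneg (ε : ℝ) {η : ℝ} (hη : 0 < η) :
    0 ≤ gaussianPrivacyProfile ε η := by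
  have h := pi_gaussianReal_toReal_sub_le (ι := Unit) (a := fun _ => η) (b := fun _ => 0)
    (fun h => hη.ne' (congr_fun h ())) one_ne_zero ε MeasurableSet.empty
  simpa [sqrt_sq hη.le] using h

theorem gdp_gaussian_mechanism_general (d : ℕ) (Δ μ : ℝ) (hΔ : 0 < Δ) (hμ : 0 < μ)
    (a b : Fin d → ℝ) (hsens : Real.sqrt (∑ i, (a i - b i) ^ 2) ≤ Δ)
    (ε : ℝ) (hε : 0 ≤ ε) (S : Set (Fin d → ℝ)) (hS : MeasurableSet S) :
    ((Measure.pi fun i : Fin d =>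
        gaussianReal (a i) (Real.toNNReal ((Δ / μ) ^ 2))) S).toReal ≤
      Real.exp ε *
          ((Measure.pi fun i : Fin d =>
            gaussianReal (b i) (Real.toNNReal ((Δ / μ) ^ 2))) S).toReal +
        stdGaussianCDF (μ / 2 - ε / μ) - Real.exp ε * stdGaussianCDF (-(μ / 2) - ε / μ) := by
  have hσ : 0 < Δ / μ := div_pos hΔ hμ
  have hv : ((Δ / μ) ^ 2).toNNReal ≠ 0 := by positivity
  have h_sd : √(((Δ / μ) ^ 2).toNNReal : ℝ) = Δ / μ := by
    rw [Real.coe_toNNReal _ (sq_nonneg _), sqrt_sq hσ.le]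
  have h_curve : gaussianPrivacyProfile ε μ
      = stdGaussianCDF (μ / 2 - ε / μ) - exp ε * stdGaussianCDF (-(μ / 2) - ε / μ) := rfl
  rcases eq_or_ne a b with rfl | hab
  · have := gaussianPrivacyProfile_nonneg ε hμ
    have := le_mul_of_one_le_left (b := ((Measure.pi fun i : Fin d =>
      gaussianReal (a i) ((Δ / μ) ^ 2).toNNReal) S).toReal) ENNReal.toReal_nonneg (one_le_exp hε)
    linarith
  · have hη := sqrt_sum_sq_sub_pos hab
    have h_dist : √(∑ i, (a i - b i) ^ 2) / √(((Δ / μ) ^ 2).toNNReal : ℝ) ≤ μ := by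
      rw [h_sd, div_le_iff₀ hσ, mul_div_cancel₀ _ hμ.ne']
      exact hsens
    have := (strictMonoOn_gaussianPrivacyProfile ε).monotoneOn
      (div_pos hη (by rwa [h_sd])) hμ h_dist
    have := pi_gaussianReal_toReal_sub_le hab hv ε hS
    linarith

/-- The exact (ε, δ)-DP curve of the μ-GDP Gaussian mechanism with ℓ2-sensitivity `Δ` and
standard deviation `σ = Δ/μ`: for `‖a − b‖₂ ≤ Δ`, `ε ≥ 0`, and measurable `S`,
`γ_a(S) ≤ exp(ε)·γ_b(S) + Φ(μ/2 − ε/μ) − exp(ε)·Φ(−μ/2 − ε/μ)`. -/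
theorem gdp_gaussian_mechanism (d : ℕ) (hd : 1 ≤ d) (Δ μ : ℝ) (hΔ : 0 < Δ) (hμ : 0 < μ)
    (a b : Fin d → ℝ) (hsens : Real.sqrt (∑ i, (a i - b i) ^ 2) ≤ Δ)
    (ε : ℝ) (hε : 0 ≤ ε) (S : Set (Fin d → ℝ)) (hS : MeasurableSet S) :
    ((Measure.pi fun i : Fin d =>
        gaussianReal (a i) (Real.toNNReal ((Δ / μ) ^ 2))) S).toReal ≤
      Real.exp ε *
          ((Measure.pi fun i : Fin d =>
            gaussianReal (b i) (Real.toNNReal ((Δ / μ) ^ 2))) S).toReal +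
        stdGaussianCDF (μ / 2 - ε / μ) - Real.exp ε * stdGaussianCDF (-(μ / 2) - ε / μ) :=
  gdp_gaussian_mechanism_general d Δ μ hΔ hμ a b hsens ε hε S hS
end

section
/- Let m ∈ ℕ with m ≥ 1, let Δ > 0 and ε > 0, and let ν = Exp(2Δ/ε) be the exponential measure with scale 2Δ/ε. For scores s : Fin m → ℝ and an index i, let A_i(s) = {η ∈ ℝ^m : ∀ j ≠ i, s(i) + η(i) > s(j) + η(j)}. Then for all s, s' : Fin m → ℝ with |s(j) − s'(j)| ≤ Δ for every j, and every index i: ν^{⊗m}(A_i(s)) ≤ exp(ε) · ν^{⊗m}(A_i(s')). (Report-Noisy-Max with exponential noise of scale 2Δ/ε, i.e., the Permute-and-Flip mechanism, satisfies ε-differential privacy.) -/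
/-!
If `update η i (η i - 2Δ)` wins under `s`, then `η` wins under `s'`: lowering the winner's noise
by `2Δ` absorbs a change of at most `Δ` both in its own score and in each rival's. The exponential
density satisfies `f x ≤ exp (c / λ) · f (x + c)` for `c ≥ 0`, so this translation of the `i`-th
coordinate costs at most a factor `exp (2Δ / λ) = exp ε`; slicing the product measure along
coordinate `i` transfers the one-dimensional bound to `ν^{⊗m}`.
-/

open MeasureTheory

/-- The exponential measure `Exp(λ)` with scale `λ`, with density `x ↦ (1/λ)·exp(−x/λ)`
for `x ≥ 0` (and `0` for `x < 0`) with respect to Lebesgue measure. -/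
noncomputable def expMeasureScale (l : ℝ) : Measure ℝ :=
  volume.withDensity fun x =>
    ENNReal.ofReal (if 0 ≤ x then 1 / l * Real.exp (-x / l) else 0)

open scoped ENNReal

theorem withDensity_le_mul_withDensity_preimage_sub {f : ℝ → ℝ≥0∞} {C : ℝ≥0∞} {c : ℝ}
    (hf : ∀ x, f x ≤ C * f (x + c)) (hC : C ≠ ∞) (B : Set ℝ) :
    volume.withDensity f B ≤ C * volume.withDensity f ((· - c) ⁻¹' B) := by
  have hshift : ∫⁻ x in (· - c) ⁻¹' B, f x = ∫⁻ x in B, f (x + c) := by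
    rw [← (measurePreserving_add_right volume c).setLIntegral_comp_preimage_emb
      (measurableEmbedding_addRight c)]
    simp [Set.preimage_preimage]
  calc volume.withDensity f B = ∫⁻ x in B, f x := withDensity_apply' f B
    _ ≤ ∫⁻ x in B, C * f (x + c) := lintegral_mono hf
    _ = C * volume.withDensity f ((· - c) ⁻¹' B) := by
      rw [lintegral_const_mul' _ _ hC, withDensity_apply', hshift]

theorem expDensity_le_exp_mul {l c : ℝ} (hl : 0 < l) (hc : 0 ≤ c) (x : ℝ) :
    ENNReal.ofReal (if 0 ≤ x then 1 / l * Real.exp (-x / l) else 0) ≤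
      ENNReal.ofReal (Real.exp (c / l)) *
        ENNReal.ofReal (if 0 ≤ x + c then 1 / l * Real.exp (-(x + c) / l) else 0) := by
  rcases le_or_gt 0 x with hx | hx
  · have hexp : Real.exp (c / l) * (1 / l * Real.exp (-(x + c) / l))
        = 1 / l * Real.exp (-x / l) := by
      rw [mul_left_comm, ← Real.exp_add]
      congr 2
      field_simp
      ring
    rw [if_pos hx, if_pos (by linarith), ← ENNReal.ofReal_mul (Real.exp_nonneg _), hexp]
  · simp [if_neg hx.not_ge]

instance (l : ℝ) : SigmaFinite (expMeasureScale l) :=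
  SigmaFinite.withDensity_of_ne_top' fun _ => ENNReal.ofReal_ne_top

theorem expMeasureScale_le_exp_mul_preimage_sub {l c : ℝ} (hl : 0 < l) (hc : 0 ≤ c)
    (B : Set ℝ) :
    expMeasureScale l B ≤
      ENNReal.ofReal (Real.exp (c / l)) * expMeasureScale l ((· - c) ⁻¹' B) :=
  withDensity_le_mul_withDensity_preimage_sub (expDensity_le_exp_mul hl hc)
    ENNReal.ofReal_ne_top B

section Pi

variable {n : ℕ} {α : Fin (n + 1) → Type*} [∀ j, MeasurableSpace (α j)]
  (μ : ∀ j, Measure (α j)) [∀ j, SigmaFinite (μ j)]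

theorem Measure.pi_apply_eq_lintegral_insertNth (i : Fin (n + 1))
    {A : Set (∀ j, α j)} (hA : MeasurableSet A) :
    Measure.pi μ A =
      ∫⁻ y, μ i {x | i.insertNth x y ∈ A} ∂Measure.pi fun k => μ (i.succAbove k) := by
  have he := measurePreserving_piFinSuccAbove μ i
  rw [← he.symm.measure_preimage hA.nullMeasurableSet,
    Measure.prod_apply_symm (hA.preimage (MeasurableEquiv.piFinSuccAbove α i).symm.measurable)]
  rfl

theorem Measure.pi_le_mul_pi_preimage_update (i : Fin (n + 1)) {g : α i → α i}
    (hg : Measurable g) {C : ℝ≥0∞} (hC : C ≠ ∞) (hμ : ∀ B, μ i B ≤ C * μ i (g ⁻¹' B))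
    {A : Set (∀ j, α j)} (hA : MeasurableSet A) :
    Measure.pi μ A ≤ C * Measure.pi μ ((fun η => Function.update η i (g (η i))) ⁻¹' A) := by
  have hT : Measurable fun η : ∀ j, α j => Function.update η i (g (η i)) := by fun_prop
  rw [Measure.pi_apply_eq_lintegral_insertNth μ i hA,
    Measure.pi_apply_eq_lintegral_insertNth μ i (hA.preimage hT), ← lintegral_const_mul' _ _ hC]
  refine lintegral_mono fun y => ?_
  simpa using hμ {x | i.insertNth x y ∈ A}

end Pi

def winningSet {ι : Type*} (s : ι → ℝ) (i : ι) : Set (ι → ℝ) :=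
  {η | ∀ j, j ≠ i → s i + η i > s j + η j}

theorem measurableSet_winningSet {ι : Type*} [Countable ι] (s : ι → ℝ) (i : ι) :
    MeasurableSet (winningSet s i) := by
  unfold winningSet
  measurability

theorem preimage_update_sub_winningSet_subset {ι : Type*} [DecidableEq ι] {s s' : ι → ℝ}
    {Δ : ℝ} (hsens : ∀ j, |s j - s' j| ≤ Δ) (i : ι) :
    (fun η => Function.update η i (η i - 2 * Δ)) ⁻¹' winningSet s i ⊆ winningSet s' i := by
  intro η hη j hj
  have hwin := hη j hj
  simp only [Function.update_self, Function.update_of_ne hj] at hwin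
  have hi := abs_le.mp (hsens i)
  have hj' := abs_le.mp (hsens j)
  linarith [hi.1, hj'.2]

theorem report_noisy_max_exponential_dp_general (m : ℕ) (Δ ε : ℝ) (hΔ : 0 < Δ)
    (hε : 0 < ε) (s s' : Fin m → ℝ) (hsens : ∀ j, |s j - s' j| ≤ Δ) (i : Fin m) :
    (Measure.pi fun _ : Fin m => expMeasureScale (2 * Δ / ε))
        {η : Fin m → ℝ | ∀ j, j ≠ i → s i + η i > s j + η j} ≤
      ENNReal.ofReal (Real.exp ε) *
        (Measure.pi fun _ : Fin m => expMeasureScale (2 * Δ / ε))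
          {η : Fin m → ℝ | ∀ j, j ≠ i → s' i + η i > s' j + η j} := by
  obtain ⟨n, rfl⟩ := Nat.exists_eq_add_one_of_ne_zero i.pos.ne'
  have hl : 0 < 2 * Δ / ε := by positivity
  have hexp : 2 * Δ / (2 * Δ / ε) = ε := by field_simp
  have hshift (B : Set ℝ) := hexp ▸
    expMeasureScale_le_exp_mul_preimage_sub hl (by positivity : 0 ≤ 2 * Δ) B
  calc _ ≤ ENNReal.ofReal (Real.exp ε) * (Measure.pi fun _ => expMeasureScale (2 * Δ / ε))
          ((fun η => Function.update η i (η i - 2 * Δ)) ⁻¹' winningSet s i) :=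
        Measure.pi_le_mul_pi_preimage_update _ i (measurable_sub_const _)
          ENNReal.ofReal_ne_top hshift (measurableSet_winningSet s i)
    _ ≤ _ := by gcongr; exact preimage_update_sub_winningSet_subset hsens i

/-- Report-Noisy-Max with i.i.d. exponential noise of scale `2Δ/ε` (the Permute-and-Flip
mechanism) satisfies `ε`-DP: for score vectors `s, s'` with `|s(j) − s'(j)| ≤ Δ` for all `j`,
the probability that candidate `i` wins under `s` is at most `exp(ε)` times the probability
that it wins under `s'`. -/
theorem report_noisy_max_exponential_dp (m : ℕ) (hm : 1 ≤ m) (Δ ε : ℝ) (hΔ : 0 < Δ)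
    (hε : 0 < ε) (s s' : Fin m → ℝ) (hsens : ∀ j, |s j - s' j| ≤ Δ) (i : Fin m) :
    (Measure.pi fun _ : Fin m => expMeasureScale (2 * Δ / ε))
        {η : Fin m → ℝ | ∀ j, j ≠ i → s i + η i > s j + η j} ≤
      ENNReal.ofReal (Real.exp ε) *
        (Measure.pi fun _ : Fin m => expMeasureScale (2 * Δ / ε))
          {η : Fin m → ℝ | ∀ j, j ≠ i → s' i + η i > s' j + η j} :=
  report_noisy_max_exponential_dp_general m Δ ε hΔ hε s s' hsens i
end

section
/- Let m ∈ ℕ with m ≥ 1, let Δ > 0 and ε > 0, and let ν = Gumbel(2Δ/ε) be the Gumbel measure with scale 2Δ/ε. For scores s : Fin m → ℝ and an index i, let A_i(s) = {η ∈ ℝ^m : ∀ j ≠ i, s(i) + η(i) > s(j) + η(j)}. Then for all s, s' : Fin m → ℝ with |s(j) − s'(j)| ≤ Δ for every j, and every index i: ν^{⊗m}(A_i(s)) ≤ exp(ε) · ν^{⊗m}(A_i(s')). (Report-Noisy-Max with Gumbel noise of scale 2Δ/ε, i.e., the exponential mechanism, satisfies ε-differential privacy.) -/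
/-!
Adding `2Δ` to the noise of the winning index turns a win under `s` into a win under `s'`, so
`A_i(s)` lies in the preimage of `A_i(s')` under this shift of one coordinate. It therefore
suffices that translating `Gumbel(β)` by `εβ` multiplies its density by at most `exp ε`: the
factor `exp(-x/β)` gains exactly `exp ε`, while the double-exponential factor only decreases.
-/

open MeasureTheory

/-- The Gumbel measure `Gumbel(β)` with scale `β`, with density
`x ↦ (1/β)·exp(−x/β − exp(−x/β))` with respect to Lebesgue measure. -/
noncomputable def gumbelMeasure (β : ℝ) : Measure ℝ :=
  volume.withDensity fun x =>
    ENNReal.ofReal (1 / β * Real.exp (-x / β - Real.exp (-x / β)))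

open Function
open scoped ENNReal

namespace MeasureTheory.Measure

theorem map_add_right_withDensity {G : Type*} [MeasurableSpace G] [AddGroup G] [MeasurableAdd G]
    (μ : Measure G) [μ.IsAddRightInvariant] (f : G → ℝ≥0∞) (c : G) :
    (μ.withDensity f).map (· + c) = μ.withDensity fun x => f (x - c) := by
  ext s hs
  rw [map_apply (measurable_add_const c) hs, withDensity_apply _ (measurable_add_const c hs),
    withDensity_apply _ hs]
  simpa using (measurePreserving_add_right μ c).setLIntegral_comp_preimage_emb
    (measurableEmbedding_addRight c) (fun x => f (x - c)) s

theorem map_add_right_withDensity_le_smul {G : Type*} [MeasurableSpace G] [AddGroup G]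
    [MeasurableAdd G] (μ : Measure G) [μ.IsAddRightInvariant] {f : G → ℝ≥0∞} (hf : Measurable f)
    {c : G} {K : ℝ≥0∞} (hfc : ∀ x, f (x - c) ≤ K * f x) :
    (μ.withDensity f).map (· + c) ≤ K • μ.withDensity f := by
  rw [map_add_right_withDensity, ← withDensity_smul K hf]
  exact withDensity_mono (.of_forall hfc)

theorem map_prodMap_id_le_smul {α β : Type*} [MeasurableSpace α] [MeasurableSpace β]
    (μ : Measure α) (ν : Measure β) [SFinite μ] [SFinite ν] {f : α → α} (hf : Measurable f)
    {K : ℝ≥0∞} (h : μ.map f ≤ K • μ) :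
    (μ.prod ν).map (Prod.map f id) ≤ K • μ.prod ν := by
  rw [← map_prod_map μ ν hf measurable_id, map_id, ← prod_smul_left]
  exact prod_mono h le_rfl

theorem map_update_pi_le_smul {α : Type*} [MeasurableSpace α] {m : ℕ} (μ : Fin m → Measure α)
    [∀ j, SigmaFinite (μ j)] (i : Fin m) {f : α → α} (hf : Measurable f) {K : ℝ≥0∞}
    (h : (μ i).map f ≤ K • μ i) :
    (Measure.pi μ).map (fun η => update η i (f (η i))) ≤ K • Measure.pi μ := by
  obtain ⟨n, rfl⟩ := Nat.exists_eq_add_one_of_ne_zero i.pos.ne'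
  set ρ := Measure.pi fun j => μ (i.succAbove j)
  set e := MeasurableEquiv.piFinSuccAbove (fun _ => α) i
  have he : MeasurePreserving e (Measure.pi μ) ((μ i).prod ρ) :=
    measurePreserving_piFinSuccAbove μ i
  have hfactor : (fun η => update η i (f (η i))) = e.symm ∘ Prod.map f id ∘ e := by
    funext η
    simp [e, Fin.insertNthEquiv]
  rw [hfactor, ← map_map e.symm.measurable ((hf.prodMap measurable_id).comp e.measurable),
    ← map_map (hf.prodMap measurable_id) e.measurable, he.map_eq]
  calc (((μ i).prod ρ).map (Prod.map f id)).map e.symm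
      ≤ (K • (μ i).prod ρ).map e.symm :=
        map_mono (map_prodMap_id_le_smul _ _ hf h) e.symm.measurable
    _ = K • Measure.pi μ := by rw [Measure.map_smul, he.symm.map_eq]

end MeasureTheory.Measure

noncomputable def gumbelDensity (β x : ℝ) : ℝ := 1 / β * Real.exp (-x / β - Real.exp (-x / β))

theorem gumbelMeasure_eq_withDensity (β : ℝ) :
    gumbelMeasure β = volume.withDensity fun x => ENNReal.ofReal (gumbelDensity β x) := rfl

instance (β : ℝ) : SigmaFinite (gumbelMeasure β) := by
  rw [gumbelMeasure_eq_withDensity]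
  infer_instance

theorem gumbelDensity_sub_le {β ε : ℝ} (hβ : 0 < β) (hε : 0 ≤ ε) (x : ℝ) :
    gumbelDensity β (x - ε * β) ≤ Real.exp ε * gumbelDensity β x := by
  have hshift : -(x - ε * β) / β = -x / β + ε := by field_simp; ring
  rw [gumbelDensity, gumbelDensity, hshift, mul_left_comm, ← Real.exp_add]
  gcongr
  have : Real.exp (-x / β) ≤ Real.exp (-x / β + ε) := Real.exp_le_exp.mpr (by linarith)
  linarith

theorem gumbelMeasure_map_add_le_smul {β ε : ℝ} (hβ : 0 < β) (hε : 0 ≤ ε) :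
    (gumbelMeasure β).map (· + ε * β) ≤ ENNReal.ofReal (Real.exp ε) • gumbelMeasure β :=
  Measure.map_add_right_withDensity_le_smul volume (by fun_prop) fun x => by
    rw [← ENNReal.ofReal_mul (Real.exp_pos ε).le]
    exact ENNReal.ofReal_le_ofReal (gumbelDensity_sub_le hβ hε x)

def noisyMaxWins {ι : Type*} (s : ι → ℝ) (i : ι) : Set (ι → ℝ) :=
  {η | ∀ j, j ≠ i → s i + η i > s j + η j}

theorem noisyMaxWins_subset_preimage_update {ι : Type*} [DecidableEq ι] {s s' : ι → ℝ} {Δ : ℝ}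
    (hsens : ∀ j, |s j - s' j| ≤ Δ) (i : ι) :
    noisyMaxWins s i ⊆ (fun η => update η i (η i + 2 * Δ)) ⁻¹' noisyMaxWins s' i := by
  intro η hwin j hj
  have hsi := (abs_le.mp (hsens i)).2
  have hsj := (abs_le.mp (hsens j)).1
  simp only [update_self, update_of_ne hj]
  linarith [hwin j hj]

theorem report_noisy_max_gumbel_dp_general (m : ℕ) (Δ ε : ℝ) (hΔ : 0 < Δ) (hε : 0 < ε)
    (s s' : Fin m → ℝ) (hsens : ∀ j, |s j - s' j| ≤ Δ) (i : Fin m) :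
    (Measure.pi fun _ : Fin m => gumbelMeasure (2 * Δ / ε))
        {η : Fin m → ℝ | ∀ j, j ≠ i → s i + η i > s j + η j} ≤
      ENNReal.ofReal (Real.exp ε) *
        (Measure.pi fun _ : Fin m => gumbelMeasure (2 * Δ / ε))
          {η : Fin m → ℝ | ∀ j, j ≠ i → s' i + η i > s' j + η j} := by
  set μ := Measure.pi fun _ : Fin m => gumbelMeasure (2 * Δ / ε)
  set shift := fun η : Fin m → ℝ => update η i (η i + 2 * Δ)
  have hscale : 2 * Δ = ε * (2 * Δ / ε) := by field_simp
  have hnoise : (gumbelMeasure (2 * Δ / ε)).map (· + 2 * Δ) ≤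
      ENNReal.ofReal (Real.exp ε) • gumbelMeasure (2 * Δ / ε) := by
    simpa only [← hscale] using
      gumbelMeasure_map_add_le_smul (β := 2 * Δ / ε) (by positivity) hε.le
  calc μ (noisyMaxWins s i) ≤ μ (shift ⁻¹' noisyMaxWins s' i) :=
        measure_mono (noisyMaxWins_subset_preimage_update hsens i)
    _ ≤ μ.map shift (noisyMaxWins s' i) := Measure.le_map_apply (by fun_prop) _
    _ ≤ (ENNReal.ofReal (Real.exp ε) • μ) (noisyMaxWins s' i) :=
        Measure.map_update_pi_le_smul _ i (measurable_add_const _) hnoise _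
    _ = ENNReal.ofReal (Real.exp ε) * μ (noisyMaxWins s' i) := Measure.smul_apply ..

/-- Report-Noisy-Max with i.i.d. Gumbel noise of scale `2Δ/ε` (the exponential mechanism)
satisfies `ε`-DP: for score vectors `s, s'` with `|s(j) − s'(j)| ≤ Δ` for all `j`, the
probability that candidate `i` wins under `s` is at most `exp(ε)` times the probability that
it wins under `s'`. -/
theorem report_noisy_max_gumbel_dp (m : ℕ) (hm : 1 ≤ m) (Δ ε : ℝ) (hΔ : 0 < Δ) (hε : 0 < ε)
    (s s' : Fin m → ℝ) (hsens : ∀ j, |s j - s' j| ≤ Δ) (i : Fin m) :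
    (Measure.pi fun _ : Fin m => gumbelMeasure (2 * Δ / ε))
        {η : Fin m → ℝ | ∀ j, j ≠ i → s i + η i > s j + η j} ≤
      ENNReal.ofReal (Real.exp ε) *
        (Measure.pi fun _ : Fin m => gumbelMeasure (2 * Δ / ε))
          {η : Fin m → ℝ | ∀ j, j ≠ i → s' i + η i > s' j + η j} :=
  report_noisy_max_gumbel_dp_general m Δ ε hΔ hε s s' hsens i
end

section
/- Let m ∈ ℕ with m ≥ 1, let β > 0, and let ν = Gumbel(β) be the Gumbel measure with scale β. Then for every s : Fin m → ℝ and every index i, the probability that candidate i wins Report-Noisy-Max with i.i.d. Gumbel(β) noise is the softmax weight: ν^{⊗m}({η ∈ ℝ^m : ∀ j ≠ i, s(i) + η(i) > s(j) + η(j)}) = exp(s(i)/β) / (∑_{j=1}^m exp(s(j)/β)). -/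
open MeasureTheory

/-!
The substitution `u = exp (-x / β)` carries `Gumbel(β)` to the standard exponential law, so the
distribution function of `Gumbel(β)` is `t ↦ exp (-exp (-t / β))`. Conditioning on the
noise `x` of candidate `i`, it wins with probability
`∏_{j ≠ i} exp (-exp (-(x + s i - s j) / β)) = exp (-(W * u))`,
where `W = ∑_{j ≠ i} exp ((s j - s i) / β)`. Integrating against the exponential law gives
`∫_0^∞ exp (-(1 + W) u) du = 1 / (1 + W)`, which is the softmax weight of `i`.
-/

open Real Set ENNReal

instance inst_s8 (β : ℝ) : SigmaFinite (gumbelMeasure β) := by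
  unfold gumbelMeasure
  infer_instance

lemma lintegral_mul_comp_exp_neg_div {β : ℝ} (hβ : 0 < β) (g : ℝ → ℝ≥0∞) :
    ∫⁻ x, ENNReal.ofReal (1 / β * exp (-x / β)) * g (exp (-x / β)) = ∫⁻ u in Ioi 0, g u := by
  have hrange : (fun x => exp (-x / β)) '' univ = Ioi 0 := by
    refine Set.ext fun u => ⟨?_, fun hu => ⟨-β * log u, trivial, ?_⟩⟩
    · rintro ⟨x, -, rfl⟩
      exact exp_pos _
    · simp only [neg_mul, neg_neg, mul_div_cancel_left₀ _ hβ.ne', exp_log hu]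
  have hinj : InjOn (fun x => exp (-x / β)) univ := fun x _ y _ h => by
    have := exp_injective h
    field_simp at this
    linarith
  have hderiv (x : ℝ) :
      HasDerivWithinAt (fun x => exp (-x / β)) (-(1 / β * exp (-x / β))) univ x := by
    convert! (((hasDerivAt_neg x).div_const β).exp).hasDerivWithinAt using 1
    ring
  rw [← hrange, lintegral_image_eq_lintegral_abs_deriv_mul MeasurableSet.univ
    (fun x _ => hderiv x) hinj, Measure.restrict_univ]
  simp_rw [abs_neg, abs_of_pos (by positivity : 0 < 1 / β * exp _)]

lemma lintegral_gumbelMeasure_comp_exp_neg_div {β : ℝ} (hβ : 0 < β) (g : ℝ → ℝ≥0∞) :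
    ∫⁻ x, g (exp (-x / β)) ∂gumbelMeasure β =
      ∫⁻ u in Ioi 0, ENNReal.ofReal (exp (-u)) * g u := by
  rw [gumbelMeasure, lintegral_withDensity_eq_lintegral_mul_non_measurable _
    (by fun_prop) (.of_forall fun _ => ofReal_lt_top), ← lintegral_mul_comp_exp_neg_div hβ]
  congr 1 with x
  rw [Pi.mul_apply, ← mul_assoc, ← ofReal_mul (by positivity), mul_assoc, ← exp_add,
    sub_eq_add_neg]

lemma lintegral_ofReal_exp_neg_mul_Ioi {c : ℝ} (hc : 0 < c) (a : ℝ) :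
    ∫⁻ u in Ioi a, ENNReal.ofReal (exp (-(c * u))) = ENNReal.ofReal (exp (-(c * a)) / c) := by
  have h := integral_exp_mul_Ioi (neg_neg_of_pos hc) a
  simp only [neg_mul, div_neg, neg_div, neg_neg] at h
  rw [← h, ofReal_integral_eq_lintegral_ofReal]
  · simpa [IntegrableOn] using integrableOn_exp_mul_Ioi (neg_neg_of_pos hc) a
  · exact .of_forall fun _ => (exp_pos _).le

theorem gumbelMeasure_Iio {β : ℝ} (hβ : 0 < β) (t : ℝ) :
    gumbelMeasure β (Iio t) = ENNReal.ofReal (exp (-exp (-t / β))) := by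
  set a := exp (-t / β)
  have hpre : Iio t = (fun x => exp (-x / β)) ⁻¹' Ioi a := by
    ext x
    simp [a, div_lt_div_iff_of_pos_right hβ]
  calc gumbelMeasure β (Iio t)
      = ∫⁻ x, (Ioi a).indicator 1 (exp (-x / β)) ∂gumbelMeasure β := by
        rw [hpre, ← lintegral_indicator_one (measurableSet_Ioi.preimage (by fun_prop))]
        rfl
    _ = ∫⁻ u in Ioi a, ENNReal.ofReal (exp (-(1 * u))) := by
        rw [lintegral_gumbelMeasure_comp_exp_neg_div hβ]
        have hind (u : ℝ) : ENNReal.ofReal (exp (-u)) * (Ioi a).indicator 1 u =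
            (Ioi a).indicator (fun u => ENNReal.ofReal (exp (-(1 * u)))) u := by
          by_cases hu : u ∈ Ioi a <;> simp [hu]
        simp_rw [hind]
        rw [lintegral_indicator measurableSet_Ioi, Measure.restrict_restrict measurableSet_Ioi,
          Ioi_inter_Ioi, max_eq_left (exp_pos _).le]
    _ = ENNReal.ofReal (exp (-exp (-t / β))) := by
        rw [lintegral_ofReal_exp_neg_mul_Ioi one_pos, one_mul, div_one]

theorem pi_noisyMax_win_eq_lintegral {n : ℕ} (μ : Fin (n + 1) → Measure ℝ)
    [∀ j, SigmaFinite (μ j)] (s : Fin (n + 1) → ℝ) (i : Fin (n + 1)) :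
    Measure.pi μ {η | ∀ j, j ≠ i → s i + η i > s j + η j} =
      ∫⁻ x, ∏ k, μ (i.succAbove k) (Iio (x + s i - s (i.succAbove k))) ∂μ i := by
  set T : Set (ℝ × (Fin n → ℝ)) := {p | ∀ k, p.2 k < p.1 + s i - s (i.succAbove k)}
  have hwin : {η : Fin (n + 1) → ℝ | ∀ j, j ≠ i → s i + η i > s j + η j} =
      MeasurableEquiv.piFinSuccAbove (fun _ => ℝ) i ⁻¹' T := by
    ext η
    have he : MeasurableEquiv.piFinSuccAbove (fun _ => ℝ) i η =
        (η i, fun k => η (i.succAbove k)) := rfl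
    simp only [mem_preimage, he, T, mem_ofPred_eq, Fin.forall_iff_succAbove i, ne_eq,
      not_true_eq_false, IsEmpty.forall_iff, true_and, Fin.succAbove_ne i, not_false_eq_true,
      forall_const]
    exact forall_congr' fun k => by constructor <;> intro h <;> linarith
  have hT : MeasurableSet T := by
    simp only [T, ofPred_forall]
    exact .iInter fun k => measurableSet_lt (by fun_prop) (by fun_prop)
  rw [hwin, (measurePreserving_piFinSuccAbove μ i).measure_preimage_equiv, Measure.prod_apply hT]
  congr 1 with x
  have hslice : Prod.mk x ⁻¹' T = univ.pi fun k => Iio (x + s i - s (i.succAbove k)) := by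
    ext y
    simp [T]
  rw [hslice, Measure.pi_pi]

theorem gumbel_max_softmax_general (m : ℕ) (β : ℝ) (hβ : 0 < β)
    (s : Fin m → ℝ) (i : Fin m) :
    (Measure.pi fun _ : Fin m => gumbelMeasure β)
        {η : Fin m → ℝ | ∀ j, j ≠ i → s i + η i > s j + η j} =
      ENNReal.ofReal (Real.exp (s i / β) / ∑ j, Real.exp (s j / β)) := by
  obtain ⟨n, rfl⟩ := Nat.exists_eq_add_one.mpr i.pos
  set W := ∑ k, exp ((s (i.succAbove k) - s i) / β)
  have hW : 1 + W = (∑ j, exp (s j / β)) / exp (s i / β) := by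
    rw [Fin.sum_univ_succAbove _ i, add_div, div_self (exp_pos _).ne', Finset.sum_div]
    simp_rw [W, ← exp_sub, sub_div]
  have hcdf (x : ℝ) : ∏ k, gumbelMeasure β (Iio (x + s i - s (i.succAbove k))) =
      ENNReal.ofReal (exp (-(W * exp (-x / β)))) := by
    simp_rw [gumbelMeasure_Iio hβ, W, Finset.sum_mul, ← Finset.sum_neg_distrib, exp_sum,
      ofReal_prod_of_nonneg fun _ _ => (exp_pos _).le, ← exp_add]
    congr! 5
    ring
  rw [pi_noisyMax_win_eq_lintegral, lintegral_congr fun x => hcdf x,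
    lintegral_gumbelMeasure_comp_exp_neg_div hβ fun u => ENNReal.ofReal (exp (-(W * u)))]
  simp_rw [← ofReal_mul (exp_pos _).le, ← exp_add, ← neg_add, ← one_add_mul]
  rw [lintegral_ofReal_exp_neg_mul_Ioi (by positivity), mul_zero, neg_zero, exp_zero, hW,
    one_div_div]

/-- The Gumbel-max trick: the probability that candidate `i` wins Report-Noisy-Max with
i.i.d. `Gumbel(β)` noise is the softmax weight `exp(s(i)/β) / ∑_j exp(s(j)/β)`. -/
theorem gumbel_max_softmax (m : ℕ) (hm : 1 ≤ m) (β : ℝ) (hβ : 0 < β)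
    (s : Fin m → ℝ) (i : Fin m) :
    (Measure.pi fun _ : Fin m => gumbelMeasure β)
        {η : Fin m → ℝ | ∀ j, j ≠ i → s i + η i > s j + η j} =
      ENNReal.ofReal (Real.exp (s i / β) / ∑ j, Real.exp (s j / β)) :=
  gumbel_max_softmax_general m β hβ s i
end

section
/- Let m ∈ ℕ with m ≥ 1, let Δ > 0 and ε > 0. Then for all u, u' : Fin m → ℝ with |u(j) − u'(j)| ≤ Δ for every j, and every index i, the softmax selection probabilities satisfy: exp(ε·u(i)/(2Δ)) / (∑_{j=1}^m exp(ε·u(j)/(2Δ))) ≤ exp(ε) · exp(ε·u'(i)/(2Δ)) / (∑_{j=1}^m exp(ε·u'(j)/(2Δ))). (The exponential mechanism, which selects index i with probability proportional to exp(ε·u(i)/(2Δ)), satisfies ε-differential privacy for utility functions of sensitivity Δ.) -/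
/-- The exponential mechanism, which selects index `i` with probability proportional to
`exp(ε·u(i)/(2Δ))`, satisfies `ε`-differential privacy for utility functions of sensitivity
`Δ`: for utilities `u, u'` with `|u(j) − u'(j)| ≤ Δ` for all `j`, the softmax selection
probabilities differ by a factor of at most `exp(ε)`. -/
theorem exponential_mechanism_dp (m : ℕ) (hm : 1 ≤ m) (Δ ε : ℝ) (hΔ : 0 < Δ) (hε : 0 < ε)
    (u u' : Fin m → ℝ) (hsens : ∀ j, |u j - u' j| ≤ Δ) (i : Fin m) :
    Real.exp (ε * u i / (2 * Δ)) / (∑ j, Real.exp (ε * u j / (2 * Δ))) ≤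
      Real.exp ε *
        (Real.exp (ε * u' i / (2 * Δ)) / (∑ j, Real.exp (ε * u' j / (2 * Δ)))) := by
  have hDpos : 0 < ∑ j, Real.exp (ε * u j / (2 * Δ)) := by
    apply Finset.sum_pos (fun j _ => Real.exp_pos _)
    exact Finset.univ_nonempty_iff.mpr ⟨⟨0, hm⟩⟩
  have hD'pos : 0 < ∑ j, Real.exp (ε * u' j / (2 * Δ)) := by
    apply Finset.sum_pos (fun j _ => Real.exp_pos _)
    exact Finset.univ_nonempty_iff.mpr ⟨⟨0, hm⟩⟩
  have key : ∀ (a b : ℝ), |a - b| ≤ Δ →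
      Real.exp (ε * a / (2 * Δ)) ≤ Real.exp (ε / 2) * Real.exp (ε * b / (2 * Δ)) := by
    intro a b hab
    rw [← Real.exp_add]
    apply Real.exp_le_exp.mpr
    have h1 : a - b ≤ Δ := (abs_le.mp hab).2
    have : ε * a / (2 * Δ) - ε * b / (2 * Δ) ≤ ε / 2 := by
      rw [div_sub_div_same, ← mul_sub]
      rw [div_le_div_iff₀ (by linarith) (by norm_num)]
      nlinarith
    linarith
  have hnum : Real.exp (ε * u i / (2 * Δ)) ≤
      Real.exp (ε / 2) * Real.exp (ε * u' i / (2 * Δ)) := key _ _ (hsens i)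
  have hden : (∑ j, Real.exp (ε * u' j / (2 * Δ))) ≤
      Real.exp (ε / 2) * ∑ j, Real.exp (ε * u j / (2 * Δ)) := by
    rw [Finset.mul_sum]
    apply Finset.sum_le_sum
    intro j _
    exact key _ _ (by rw [abs_sub_comm]; exact hsens j)
  have main : Real.exp (ε * u i / (2 * Δ)) * (∑ j, Real.exp (ε * u' j / (2 * Δ))) ≤
      Real.exp ε * Real.exp (ε * u' i / (2 * Δ)) * ∑ j, Real.exp (ε * u j / (2 * Δ)) :=
    calc Real.exp (ε * u i / (2 * Δ)) * (∑ j, Real.exp (ε * u' j / (2 * Δ)))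
        ≤ (Real.exp (ε / 2) * Real.exp (ε * u' i / (2 * Δ))) *
            (Real.exp (ε / 2) * ∑ j, Real.exp (ε * u j / (2 * Δ))) :=
          mul_le_mul hnum hden (le_of_lt hD'pos) (by positivity)
      _ = Real.exp ε * Real.exp (ε * u' i / (2 * Δ)) * ∑ j, Real.exp (ε * u j / (2 * Δ)) := by
          rw [show Real.exp ε = Real.exp (ε/2) * Real.exp (ε/2) from by
            rw [← Real.exp_add]; norm_num]; ring
  rw [div_le_iff₀ hDpos,
    show Real.exp ε * (Real.exp (ε * u' i / (2 * Δ)) / (∑ j, Real.exp (ε * u' j / (2 * Δ)))) *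
        ∑ j, Real.exp (ε * u j / (2 * Δ)) =
      (Real.exp ε * Real.exp (ε * u' i / (2 * Δ)) * ∑ j, Real.exp (ε * u j / (2 * Δ))) /
        (∑ j, Real.exp (ε * u' j / (2 * Δ))) from by field_simp,
    le_div_iff₀ hD'pos]
  exact main
end

section
/- Let n ∈ ℕ with n ≥ 1 and define f : ℝ^n → ℝ by f(x) = ∑_{i=1}^n |x_i − x̄| where x̄ = (1/n)·∑_{j=1}^n x_j. Then: (i) for all x, x' ∈ [0,1]^n that differ in at most one coordinate (i.e., there is an index k with x_i = x'_i for all i ≠ k), one has |f(x) − f(x')| ≤ 2(n − 1)/n; and (ii) there exist x, x' ∈ [0,1]^n differing in at most one coordinate with |f(x) − f(x')| = 2(n − 1)/n. Hence the tight global sensitivity of f on [0,1]^n under the change-one-coordinate neighboring relation equals 2(n − 1)/n. -/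
/-- The tight global sensitivity of `f(x) = ∑_i |x_i − x̄|` on `[0,1]^n` under the
change-one-coordinate neighboring relation equals `2(n − 1)/n`:
(i) any two inputs in `[0,1]^n` differing in at most one coordinate have
`|f(x) − f(x')| ≤ 2(n − 1)/n`, and (ii) this bound is attained. -/
theorem sensitivity_sum_abs_deviation (n : ℕ) (hn : 1 ≤ n) :
    (∀ x x' : Fin n → ℝ, (∀ i, x i ∈ Set.Icc (0 : ℝ) 1) → (∀ i, x' i ∈ Set.Icc (0 : ℝ) 1) →
        (∃ k, ∀ i, i ≠ k → x i = x' i) →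
        |(∑ i, |x i - (∑ j, x j) / n|) - (∑ i, |x' i - (∑ j, x' j) / n|)| ≤
          2 * ((n : ℝ) - 1) / n) ∧
      ∃ x x' : Fin n → ℝ, (∀ i, x i ∈ Set.Icc (0 : ℝ) 1) ∧ (∀ i, x' i ∈ Set.Icc (0 : ℝ) 1) ∧
        (∃ k, ∀ i, i ≠ k → x i = x' i) ∧
        |(∑ i, |x i - (∑ j, x j) / n|) - (∑ i, |x' i - (∑ j, x' j) / n|)| =
          2 * ((n : ℝ) - 1) / n := by
  have hn0 : (0:ℝ) < n := by exact_mod_cast Nat.lt_of_lt_of_le Nat.zero_lt_one hn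
  have hn1 : (1:ℝ) ≤ (n:ℝ) := by exact_mod_cast hn
  constructor
  · rintro x x' hx hx' ⟨k, hk⟩
    set δ : ℝ := x' k - x k with hδdef
    have hδ1 : |δ| ≤ 1 := by
      have h1 := hx k; have h2 := hx' k
      simp only [Set.mem_Icc] at h1 h2
      rw [abs_le]; constructor
      · linarith [h1.2, h2.1]
      · linarith [h1.1, h2.2]
    have hsum : ∑ j, x' j = ∑ j, x j + δ := by
      have h : ∀ j ∈ Finset.univ, x' j = x j + (if j = k then δ else 0) := by
        intro j _
        by_cases h : j = k
        · subst h; simp [hδdef]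
        · simp [h, hk j h]
      rw [Finset.sum_congr rfl h, Finset.sum_add_distrib,
        Finset.sum_ite_eq' Finset.univ k (fun _ => δ)]
      simp
    set m : ℝ := (∑ j, x j) / n with hm
    have hm' : (∑ j, x' j) / n = m + δ / n := by rw [hsum, hm]; ring
    have key : ∀ i, |(|x i - m| - |x' i - (∑ j, x' j) / n|)| ≤
        if i = k then |δ| * ((n:ℝ) - 1) / n else |δ| / n := by
      intro i
      refine le_trans (abs_abs_sub_abs_le_abs_sub _ _) ?_
      by_cases h : i = k
      · subst h
        rw [hm']
        have heq : x i - m - (x' i - (m + δ / n)) = -(δ * ((n : ℝ) - 1) / n) := by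
          field_simp [hδdef]; ring
        rw [heq, abs_neg, if_pos rfl, abs_div, abs_mul,
          abs_of_nonneg hn0.le, abs_of_nonneg (by linarith : (0:ℝ) ≤ (n:ℝ) - 1)]
      · rw [hm', hk i h, if_neg h]
        have heq : x' i - m - (x' i - (m + δ / n)) = δ / n := by ring
        rw [heq, abs_div, abs_of_nonneg hn0.le]
    have habs : |(∑ i, |x i - m|) - (∑ i, |x' i - (∑ j, x' j) / n|)| ≤
        ∑ i : Fin n, (if i = k then |δ| * ((n:ℝ) - 1) / n else |δ| / n) := by
      rw [← Finset.sum_sub_distrib]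
      refine le_trans (Finset.abs_sum_le_sum_abs _ _) ?_
      exact Finset.sum_le_sum fun i _ => key i
    have hsum2 : ∑ i : Fin n, (if i = k then |δ| * ((n:ℝ) - 1) / n else |δ| / n)
        = 2 * |δ| * ((n:ℝ) - 1) / n := by
      have h : ∀ i ∈ Finset.univ, (if i = k then |δ| * ((n:ℝ) - 1) / n else |δ| / n)
          = |δ| / n + (if i = k then |δ| * ((n:ℝ) - 1) / n - |δ| / n else 0) := by
        intro i _; by_cases h : i = k <;> simp [h]
      rw [Finset.sum_congr rfl h, Finset.sum_add_distrib, Finset.sum_const,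
        Finset.sum_ite_eq' Finset.univ k (fun _ => |δ| * ((n:ℝ) - 1) / n - |δ| / n)]
      simp only [Finset.mem_univ, if_pos, Finset.card_univ, Fintype.card_fin, nsmul_eq_mul]
      field_simp
      ring
    refine le_trans habs (le_trans (le_of_eq hsum2) ?_)
    rw [div_le_div_iff₀ hn0 hn0]
    nlinarith [mul_nonneg (mul_nonneg (sub_nonneg.mpr hδ1) (sub_nonneg.mpr hn1)) hn0.le]
  · refine ⟨fun _ => 0, fun i => if i = (⟨0, hn⟩ : Fin n) then 1 else 0, ?_, ?_, ?_, ?_⟩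
    · intro i; simp
    · intro i; by_cases h : i = (⟨0, hn⟩ : Fin n) <;> simp [h]
    · exact ⟨⟨0, hn⟩, fun i hi => by simp [hi]⟩
    · have hsx' : ∑ j : Fin n, (if j = (⟨0, hn⟩ : Fin n) then (1:ℝ) else 0) = 1 := by
        rw [Finset.sum_ite_eq' Finset.univ (⟨0, hn⟩ : Fin n) (fun _ => (1:ℝ))]
        simp
      have h1 : (∑ i : Fin n, |(0:ℝ) - (∑ j : Fin n, (0:ℝ)) / n|) = 0 := by simp
      rw [h1, hsx']
      have h2 : ∀ i ∈ Finset.univ, |(if i = (⟨0, hn⟩ : Fin n) then (1:ℝ) else 0) - 1 / n|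
          = 1 / n + (if i = (⟨0, hn⟩ : Fin n) then 1 - 2 / (n:ℝ) else 0) := by
        intro i _
        by_cases h : i = (⟨0, hn⟩ : Fin n)
        · simp only [h, if_pos]
          rw [abs_of_nonneg (by rw [sub_nonneg, div_le_one hn0]; exact hn1)]
          ring
        · simp only [if_neg h, zero_sub, abs_neg, abs_div, abs_one,
            abs_of_nonneg hn0.le, add_zero]
      rw [Finset.sum_congr rfl h2, Finset.sum_add_distrib, Finset.sum_const,
        Finset.sum_ite_eq' Finset.univ (⟨0, hn⟩ : Fin n) (fun _ => 1 - 2 / (n:ℝ))]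
      simp only [Finset.mem_univ, if_pos, Finset.card_univ, Fintype.card_fin, nsmul_eq_mul]
      rw [abs_of_nonpos]
      · field_simp; ring
      · have : (n:ℝ) * (1 / n) = 1 := by field_simp
        rw [this]
        have h2n : 2 / (n:ℝ) ≤ 2 := by
          rw [div_le_iff₀ hn0]; linarith
        linarith
end

section
/- Let ι be a nonempty finite index type. For each i ∈ ι let D_i be a type with a neighboring relation ∼_i, let Ω_i be a measurable space, let M_i : D_i → Measure(Ω_i) assign a probability measure to each input, and let ε_i ≥ 0, δ_i ≥ 0 be such that M_i satisfies (ε_i, δ_i)-differential privacy: for all d ∼_i d' and all measurable S ⊆ Ω_i, M_i(d)(S) ≤ exp(ε_i)·M_i(d')(S) + δ_i. Let x, y ∈ ∏_i D_i be such that there exists an index j with x_j ∼_j y_j and x_i = y_i for all i ≠ j. Then for every measurable set S ⊆ ∏_i Ω_i, the product mechanism satisfies (⊗_i M_i(x_i))(S) ≤ exp(max_i ε_i) · (⊗_i M_i(y_i))(S) + max_i δ_i. (Parallel composition: applying independent (ε_i, δ_i)-DP mechanisms to disjoint, data-independent blocks of the dataset yields (max_i ε_i, max_i δ_i)-differential privacy.)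 -/
open MeasureTheory

/-- Auxiliary: a DP-style bound on the first factor of a product measure is preserved
by taking the product with an (equal pair of) probability measure(s). -/
lemma prod_dp_aux {A B : Type*} [MeasurableSpace A] [MeasurableSpace B]
    (κ κ' : Measure A) (ρ ρ' : Measure B)
    [IsProbabilityMeasure κ] [IsProbabilityMeasure κ']
    [IsProbabilityMeasure ρ] [IsProbabilityMeasure ρ']
    (hρ : ρ = ρ') (c d : ENNReal)
    (hκ : ∀ t : Set A, MeasurableSet t → κ t ≤ c * κ' t + d)
    (T : Set (A × B)) (hT : MeasurableSet T) :
    (κ.prod ρ) T ≤ c * (κ'.prod ρ') T + d := by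
  subst hρ
  rw [Measure.prod_apply_symm hT, Measure.prod_apply_symm hT]
  have hsec : ∀ b : B, MeasurableSet ((fun a => (a, b)) ⁻¹' T) := fun b =>
    hT.preimage measurable_prodMk_right
  calc ∫⁻ b, κ ((fun a => (a, b)) ⁻¹' T) ∂ρ
      ≤ ∫⁻ b, (c * κ' ((fun a => (a, b)) ⁻¹' T) + d) ∂ρ :=
        lintegral_mono fun b => hκ _ (hsec b)
    _ = c * ∫⁻ b, κ' ((fun a => (a, b)) ⁻¹' T) ∂ρ + d * ρ Set.univ := by
        rw [lintegral_add_right _ measurable_const, lintegral_const,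
          lintegral_const_mul _ (measurable_measure_prodMk_right hT)]
    _ = c * ∫⁻ b, κ' ((fun a => (a, b)) ⁻¹' T) ∂ρ + d := by
        rw [measure_univ, mul_one]

/-- Parallel composition: applying independent `(ε_i, δ_i)`-DP mechanisms `M_i` to the
blocks of a data-independent disjoint partition of the dataset (modeled as a product
`∏ i, D i` where neighboring datasets agree in all blocks but one, in which they are
`∼_i`-neighbors) yields `(max_i ε_i, max_i δ_i)`-differential privacy. -/
theorem parallel_composition {ι : Type*} [Fintype ι] [Nonempty ι]
    {D : ι → Type*} {Ω : ι → Type*} [∀ i, MeasurableSpace (Ω i)]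
    (Neighbor : ∀ i, D i → D i → Prop)
    (M : ∀ i, D i → Measure (Ω i))
    (hprob : ∀ i d, IsProbabilityMeasure (M i d))
    (ε δ : ι → ℝ) (hε : ∀ i, 0 ≤ ε i) (hδ : ∀ i, 0 ≤ δ i)
    (hdp : ∀ i, ∀ d d' : D i, Neighbor i d d' → ∀ S : Set (Ω i), MeasurableSet S →
      M i d S ≤ ENNReal.ofReal (Real.exp (ε i)) * M i d' S + ENNReal.ofReal (δ i))
    (x y : ∀ i, D i)
    (hneighbor : ∃ j, Neighbor j (x j) (y j) ∧ ∀ i, i ≠ j → x i = y i)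
    (S : Set (∀ i, Ω i)) (hS : MeasurableSet S) :
    (Measure.pi fun i => M i (x i)) S ≤
      ENNReal.ofReal (Real.exp (Finset.univ.sup' Finset.univ_nonempty ε)) *
          (Measure.pi fun i => M i (y i)) S +
        ENNReal.ofReal (Finset.univ.sup' Finset.univ_nonempty δ) := by
  classical
  obtain ⟨j, hj, hxy⟩ := hneighbor
  haveI : ∀ i, IsProbabilityMeasure (M i (x i)) := fun i => hprob i (x i)
  haveI : ∀ i, IsProbabilityMeasure (M i (y i)) := fun i => hprob i (y i)
  set P : ι → Prop := fun i => i = j with hP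
  set e := MeasurableEquiv.piEquivPiSubtypeProd Ω P with he
  set T := e.symm ⁻¹' S with hT
  have hTm : MeasurableSet T := e.symm.measurable hS
  have hpre : e ⁻¹' T = S := by
    rw [hT, ← Set.preimage_comp]; simp
  have hxeq := (measurePreserving_piEquivPiSubtypeProd
    (fun i => M i (x i)) P).measure_preimage_equiv T
  have hyeq := (measurePreserving_piEquivPiSubtypeProd
    (fun i => M i (y i)) P).measure_preimage_equiv T
  rw [hpre] at hxeq hyeq
  rw [hxeq, hyeq]
  -- bound for the first factor
  have hκ : ∀ t : Set (∀ i : Subtype P, Ω i), MeasurableSet t →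
      (@Measure.pi (Subtype P) (fun i => Ω i.1) (Subtype.fintype P)
          (fun i => inferInstance) (fun i => M i.1 (x i.1))) t ≤
        ENNReal.ofReal (Real.exp (Finset.univ.sup' Finset.univ_nonempty ε)) *
          (@Measure.pi (Subtype P) (fun i => Ω i.1) (Subtype.fintype P)
            (fun i => inferInstance) (fun i => M i.1 (y i.1))) t +
        ENNReal.ofReal (Finset.univ.sup' Finset.univ_nonempty δ) := by
    intro t ht
    haveI : Unique (Subtype P) := Unique.subtypeEq j
    have ht' : t = ⇑(MeasurableEquiv.piUnique fun i : Subtype P => Ω i.1) ⁻¹'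
        (⇑(MeasurableEquiv.piUnique fun i : Subtype P => Ω i.1).symm ⁻¹' t) := by
      exact (Equiv.preimage_symm_preimage _ t).symm
    rw [ht',
      (@measurePreserving_piUnique (Subtype P) (Subtype.fintype P) _ _ _
        (fun i : Subtype P => M i.1 (x i.1))).measure_preimage_equiv,
      (@measurePreserving_piUnique (Subtype P) (Subtype.fintype P) _ _ _
        (fun i : Subtype P => M i.1 (y i.1))).measure_preimage_equiv]
    refine le_trans (hdp _ _ _ ?_ _
      ((MeasurableEquiv.piUnique fun i : Subtype P => Ω i.1).symm.measurable ht))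
      (add_le_add (mul_le_mul' ?_ le_rfl) ?_)
    · have hd : ((default : Subtype P) : ι) = j := (default : Subtype P).2
      rw [hd]; exact hj
    · exact ENNReal.ofReal_le_ofReal (Real.exp_le_exp.2
        (Finset.le_sup' ε (Finset.mem_univ _)))
    · exact ENNReal.ofReal_le_ofReal (Finset.le_sup' δ (Finset.mem_univ _))
  refine prod_dp_aux _ _ _ _ ?_ _ _ hκ T hTm
  congr 1
  funext i
  rw [hxy i.1 i.2]
end
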